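/- Let N ≥ 2 be an integer and α, β ∈ ℝ with β ≤ N. Then for every smooth function a : ℝ → ℝ with compact support contained in (0,∞): ( ∫_0^∞ r^{−α} a′(r)² (sinh r)^{N−1} dr ) · ( ∫_0^∞ r^{α−2β+2} a(r)² (sinh r)^{N−1} dr ) ≥ ((N−β)²/4) ( ∫_0^∞ r^{−β} a(r)² (sinh r)^{N−1} dr )². -/

import Mathlib

open Real MeasureTheory

lemma sinh_le_mul_cosh' {x : ℝ} (hx : 0 ≤ x) : Real.sinh x ≤ x * Real.cosh x := by
  have hmono : MonotoneOn (fun x : ℝ => x * Real.cosh x - Real.sinh x) (Set.Ici 0) := by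
    apply monotoneOn_of_deriv_nonneg (convex_Ici 0)
    · exact ((continuous_id.mul Real.continuous_cosh).sub Real.continuous_sinh).continuousOn
    · intro y hy
      exact (((hasDerivAt_id y).mul (Real.hasDerivAt_cosh y)).sub
        (Real.hasDerivAt_sinh y)).differentiableAt.differentiableWithinAt
    · intro y hy
      rw [interior_Ici] at hy
      have hD : HasDerivAt (fun x : ℝ => x * Real.cosh x - Real.sinh x)
          (1 * Real.cosh y + y * Real.sinh y - Real.cosh y) y :=
        ((hasDerivAt_id' (x := y)).mul (Real.hasDerivAt_cosh y)).sub (Real.hasDerivAt_sinh y)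
      rw [hD.deriv]
      have : 0 ≤ y * Real.sinh y :=
        mul_nonneg (le_of_lt hy) (Real.sinh_nonneg_iff.mpr (le_of_lt hy))
      linarith
  have h0 := hmono (Set.self_mem_Ici) hx hx
  simp at h0
  linarith

lemma cs_integral' (μ : Measure ℝ) (f g : ℝ → ℝ)
    (hf : Integrable (fun x => f x ^ 2) μ) (hg : Integrable (fun x => g x ^ 2) μ)
    (hfg : Integrable (fun x => f x * g x) μ) :
    (∫ x, f x * g x ∂μ) ^ 2 ≤ (∫ x, f x ^ 2 ∂μ) * (∫ x, g x ^ 2 ∂μ) := by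
  have key : ∀ t : ℝ, 0 ≤ (∫ x, g x ^ 2 ∂μ) * (t * t)
      + (-2 * ∫ x, f x * g x ∂μ) * t + (∫ x, f x ^ 2 ∂μ) := by
    intro t
    have h0 : 0 ≤ ∫ x, (f x - t * g x) ^ 2 ∂μ := integral_nonneg fun x => sq_nonneg _
    have hexp : (fun x => (f x - t * g x) ^ 2)
        = fun x => (f x ^ 2 + (t * t) * g x ^ 2) - (2 * t) * (f x * g x) := by
      funext x; ring
    have h1 : Integrable (fun x => f x ^ 2 + (t * t) * g x ^ 2) μ := hf.add (hg.const_mul _)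
    have h2 : Integrable (fun x => (2 * t) * (f x * g x)) μ := hfg.const_mul _
    rw [hexp, integral_sub h1 h2,
      integral_add hf (hg.const_mul _), integral_const_mul, integral_const_mul] at h0
    linarith
  have hd := discrim_le_zero key
  rw [discrim] at hd
  nlinarith [hd]

lemma integrableOn_aux' {f : ℝ → ℝ} {K : Set ℝ} (hK : IsCompact K) (hKs : K ⊆ Set.Ioi 0)
    (hf : ContinuousOn f (Set.Ioi 0)) (hsupp : Function.support f ⊆ K) :
    IntegrableOn f (Set.Ioi 0) := by
  have h1 : IntegrableOn f K := (hf.mono hKs).integrableOn_compact hK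
  have h2 : Integrable f := by
    rwa [← integrableOn_iff_integrable_of_support_subset hsupp]
  exact h2.integrableOn

theorem stmt_9 (N : ℕ) (hN : 2 ≤ N) (α β : ℝ) (hβ : β ≤ N)
    (a : ℝ → ℝ) (ha : ContDiff ℝ (⊤ : ℕ∞) a) (hac : HasCompactSupport a)
    (hsupp : tsupport a ⊆ Set.Ioi (0 : ℝ)) :
    (∫ r in Set.Ioi (0 : ℝ), r ^ (-α) * (deriv a r) ^ 2 * Real.sinh r ^ (N - 1))
      * (∫ r in Set.Ioi (0 : ℝ), r ^ (α - 2 * β + 2) * (a r) ^ 2 * Real.sinh r ^ (N - 1))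
    ≥ ((N : ℝ) - β) ^ 2 / 4
        * (∫ r in Set.Ioi (0 : ℝ), r ^ (-β) * (a r) ^ 2 * Real.sinh r ^ (N - 1)) ^ 2 := by
  have hKc : IsCompact (tsupport a) := hac
  have haz : ∀ r, r ∉ tsupport a → a r = 0 := fun r hr => image_eq_zero_of_notMem_tsupport hr
  have hdaz : ∀ r, r ∉ tsupport a → deriv a r = 0 := fun r hr =>
    Function.notMem_support.mp fun h => hr (support_deriv_subset h)
  have hcont_a : Continuous a := ha.continuous
  have hcont_da : Continuous (deriv a) := ha.continuous_deriv (by simp)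
  have hrc : ∀ c : ℝ, ContinuousOn (fun r : ℝ => r ^ c) (Set.Ioi 0) := fun c r hr =>
    (Real.continuousAt_rpow_const r c (Or.inl (ne_of_gt hr))).continuousWithinAt
  -- the auxiliary function for integration by parts
  set F : ℝ → ℝ := fun r => r ^ (1 - β) * Real.sinh r ^ (N - 1) * a r ^ 2 with hF
  -- integrands
  set φA : ℝ → ℝ := fun r => r ^ (-α) * (deriv a r) ^ 2 * Real.sinh r ^ (N - 1) with hφA
  set φB : ℝ → ℝ := fun r => r ^ (α - 2 * β + 2) * (a r) ^ 2 * Real.sinh r ^ (N - 1) with hφB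
  set φI : ℝ → ℝ := fun r => r ^ (-β) * (a r) ^ 2 * Real.sinh r ^ (N - 1) with hφI
  set ψ : ℝ → ℝ := fun r => r ^ (1 - β) * a r ^ 2 * (Real.sinh r ^ (N - 2) * Real.cosh r) with hψ
  set φG : ℝ → ℝ := fun r => (1 - β) * φI r + ((N - 1 : ℕ) : ℝ) * ψ r with hφG
  set φH : ℝ → ℝ := fun r => r ^ (1 - β) * Real.sinh r ^ (N - 1) * (2 * a r * deriv a r) with hφH
  -- basic facts about F
  have hF_supp : Function.support F ⊆ tsupport a := by
    intro r hr
    by_contra h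
    exact hr (by simp [hF, haz r h])
  have hFc : HasCompactSupport F :=
    IsCompact.of_isClosed_subset hKc (isClosed_tsupport F)
      (closure_minimal hF_supp (isClosed_tsupport a))
  have hF1 : ContDiff ℝ 1 F := by
    rw [contDiff_iff_contDiffAt]
    intro r
    by_cases hr : r ∈ tsupport a
    · have hr0 : 0 < r := hsupp hr
      have h1 : ContDiffAt ℝ 1 (fun s : ℝ => s ^ (1 - β)) r :=
        Real.contDiffAt_rpow_const_of_ne (ne_of_gt hr0)
      have h2 : ContDiffAt ℝ 1 (fun s : ℝ => Real.sinh s ^ (N - 1)) r :=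
        (Real.contDiff_sinh.pow (N - 1)).contDiffAt
      have h3 : ContDiffAt ℝ 1 (fun s : ℝ => a s ^ 2) r :=
        ((ha.of_le (by simp)).pow 2).contDiffAt
      exact (h1.mul h2).mul h3
    · have heq : F =ᶠ[nhds r] 0 := by
        filter_upwards [(isClosed_tsupport a).isOpen_compl.mem_nhds hr] with s hs
        simp [hF, haz s hs]
      exact (contDiffAt_const (c := (0 : ℝ))).congr_of_eventuallyEq heq
  have hF0 : F 0 = 0 := by
    have h0 : a 0 = 0 := haz 0 fun h => lt_irrefl 0 (Set.mem_Ioi.mp (hsupp h))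
    simp [hF, h0]
  -- derivative of F on (0, ∞)
  have hderF : ∀ r ∈ Set.Ioi (0 : ℝ), HasDerivAt F
      (((1 - β) * r ^ (1 - β - 1) * Real.sinh r ^ (N - 1)
        + r ^ (1 - β) * (((N - 1 : ℕ) : ℝ) * Real.sinh r ^ (N - 1 - 1) * Real.cosh r)) * a r ^ 2
        + r ^ (1 - β) * Real.sinh r ^ (N - 1) * (2 * a r ^ 1 * deriv a r)) r := by
    intro r hr
    exact ((Real.hasDerivAt_rpow_const (Or.inl (ne_of_gt hr))).mul
      ((Real.hasDerivAt_sinh r).pow (N - 1))).mul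
      ((ha.differentiable (by simp) r).hasDerivAt.pow 2)
  have hderiv_eq : ∀ r ∈ Set.Ioi (0 : ℝ), deriv F r = φG r + φH r := by
    intro r hr
    rw [(hderF r hr).deriv]
    have e1 : (1 : ℝ) - β - 1 = -β := by ring
    have e2 : N - 1 - 1 = N - 2 := by omega
    rw [e1, e2]
    simp only [hφG, hφI, hψ, hφH]
    ring
  -- integrability
  have intA : IntegrableOn φA (Set.Ioi 0) := by
    apply integrableOn_aux' hKc hsupp
    · exact ((hrc _).mul (hcont_da.pow 2).continuousOn).mul
        ((Real.continuous_sinh.pow _).continuousOn)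
    · intro r hr
      by_contra h
      exact hr (by simp [hφA, hdaz r h])
  have intB : IntegrableOn φB (Set.Ioi 0) := by
    apply integrableOn_aux' hKc hsupp
    · exact ((hrc _).mul (hcont_a.pow 2).continuousOn).mul
        ((Real.continuous_sinh.pow _).continuousOn)
    · intro r hr
      by_contra h
      exact hr (by simp [hφB, haz r h])
  have intI : IntegrableOn φI (Set.Ioi 0) := by
    apply integrableOn_aux' hKc hsupp
    · exact ((hrc _).mul (hcont_a.pow 2).continuousOn).mul
        ((Real.continuous_sinh.pow _).continuousOn)
    · intro r hr
      by_contra h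
      exact hr (by simp [hφI, haz r h])
  have intψ : IntegrableOn ψ (Set.Ioi 0) := by
    apply integrableOn_aux' hKc hsupp
    · exact ((hrc _).mul (hcont_a.pow 2).continuousOn).mul
        (((Real.continuous_sinh.pow _).mul Real.continuous_cosh).continuousOn)
    · intro r hr
      by_contra h
      exact hr (by simp [hψ, haz r h])
  have intH : IntegrableOn φH (Set.Ioi 0) := by
    apply integrableOn_aux' hKc hsupp
    · exact ((hrc _).mul ((Real.continuous_sinh.pow _).continuousOn)).mul
        (((continuous_const.mul hcont_a).mul hcont_da).continuousOn)
    · intro r hr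
      by_contra h
      exact hr (by simp [hφH, haz r h])
  have intG : IntegrableOn φG (Set.Ioi 0) := (intI.const_mul _).add (intψ.const_mul _)
  -- integration by parts : ∫ φG = - ∫ φH
  have hGH : (∫ r in Set.Ioi (0 : ℝ), φG r) = -∫ r in Set.Ioi (0 : ℝ), φH r := by
    have h1 : (∫ r in Set.Ioi (0 : ℝ), (φG r + φH r)) = 0 := by
      calc (∫ r in Set.Ioi (0 : ℝ), (φG r + φH r))
          = ∫ r in Set.Ioi (0 : ℝ), deriv F r :=
            setIntegral_congr_fun measurableSet_Ioi fun r hr => (hderiv_eq r hr).symm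
        _ = -F 0 := HasCompactSupport.integral_Ioi_deriv_eq hF1 hFc 0
        _ = 0 := by rw [hF0, neg_zero]
    rw [integral_add intG intH] at h1
    linarith
  -- pointwise inequality
  have hpt : ∀ r ∈ Set.Ioi (0 : ℝ), ((N : ℝ) - β) * φI r ≤ φG r := by
    intro r hr
    have hr0 : (0 : ℝ) < r := hr
    have hsinh : 0 ≤ Real.sinh r := Real.sinh_nonneg_iff.mpr hr0.le
    have hkey : Real.sinh r ≤ r * Real.cosh r := sinh_le_mul_cosh' hr0.le
    have hrpow : r ^ (1 - β) = r ^ (-β) * r := by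
      rw [show (1 : ℝ) - β = -β + 1 by ring, Real.rpow_add hr0, Real.rpow_one]
    have hS : Real.sinh r ^ (N - 1) = Real.sinh r ^ (N - 2) * Real.sinh r := by
      rw [← pow_succ]
      congr 1
      omega
    have hc : ((N : ℝ) - β) = (1 - β) + ((N - 1 : ℕ) : ℝ) := by
      have : ((N - 1 : ℕ) : ℝ) = (N : ℝ) - 1 := by
        have h1 : (1 : ℕ) ≤ N := by omega
        push_cast [Nat.cast_sub h1]
        ring
      rw [this]; ring
    simp only [hφG, hφI, hψ]
    rw [hrpow, hS, hc]
    have hcx : 0 ≤ ((N - 1 : ℕ) : ℝ) * (r ^ (-β) * a r ^ 2 * Real.sinh r ^ (N - 2)) := by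
      apply mul_nonneg (Nat.cast_nonneg _)
      exact mul_nonneg (mul_nonneg (Real.rpow_nonneg hr0.le _) (sq_nonneg _))
        (pow_nonneg hsinh _)
    have hmul := mul_le_mul_of_nonneg_left hkey hcx
    nlinarith [hmul]
  -- first inequality : (N - β) * ∫ φI ≤ - ∫ φH
  have hβN : (0 : ℝ) ≤ (N : ℝ) - β := by linarith
  have hI0 : 0 ≤ ∫ r in Set.Ioi (0 : ℝ), φI r := by
    apply setIntegral_nonneg measurableSet_Ioi
    intro r hr
    exact mul_nonneg (mul_nonneg (Real.rpow_nonneg (le_of_lt hr) _) (sq_nonneg _))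
      (pow_nonneg (Real.sinh_nonneg_iff.mpr (le_of_lt hr)) _)
  have hmain : ((N : ℝ) - β) * (∫ r in Set.Ioi (0 : ℝ), φI r)
      ≤ -∫ r in Set.Ioi (0 : ℝ), φH r := by
    have h := setIntegral_mono_on (intI.const_mul ((N : ℝ) - β)) intG measurableSet_Ioi hpt
    rw [integral_const_mul] at h
    linarith [hGH ▸ h]
  -- Cauchy–Schwarz
  set s2 : ℝ → ℝ := fun r => Real.sinh r ^ (((N : ℝ) - 1) / 2) with hs2
  set f : ℝ → ℝ := fun r => r ^ (-α / 2) * deriv a r * s2 r with hf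
  set g : ℝ → ℝ := fun r => r ^ ((α - 2 * β + 2) / 2) * a r * s2 r with hg
  have hs2sq : ∀ r ∈ Set.Ioi (0 : ℝ), s2 r * s2 r = Real.sinh r ^ (N - 1) := by
    intro r hr
    have hsp : 0 < Real.sinh r := Real.sinh_pos_iff.mpr hr
    rw [hs2]
    rw [← Real.rpow_add hsp, show ((N : ℝ) - 1) / 2 + ((N : ℝ) - 1) / 2 = (N : ℝ) - 1 by ring]
    have h1 : ((N - 1 : ℕ) : ℝ) = (N : ℝ) - 1 := by
      have : (1 : ℕ) ≤ N := by omega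
      push_cast [Nat.cast_sub this]
      ring
    rw [← h1, Real.rpow_natCast]
  have heA : Set.EqOn φA (fun r => f r ^ 2) (Set.Ioi 0) := by
    intro r hr
    have hr0 : (0 : ℝ) < r := hr
    have h1 : (r : ℝ) ^ (-α / 2) * r ^ (-α / 2) = r ^ (-α) := by
      rw [← Real.rpow_add hr0, show -α / 2 + -α / 2 = -α by ring]
    have h2 : f r ^ 2 = (r ^ (-α / 2) * r ^ (-α / 2)) * deriv a r ^ 2 * (s2 r * s2 r) := by
      rw [hf]; ring
    simp only [hφA]
    rw [h2, h1, hs2sq r hr]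
  have heB : Set.EqOn φB (fun r => g r ^ 2) (Set.Ioi 0) := by
    intro r hr
    have hr0 : (0 : ℝ) < r := hr
    have h1 : (r : ℝ) ^ ((α - 2 * β + 2) / 2) * r ^ ((α - 2 * β + 2) / 2)
        = r ^ (α - 2 * β + 2) := by
      rw [← Real.rpow_add hr0,
        show (α - 2 * β + 2) / 2 + (α - 2 * β + 2) / 2 = α - 2 * β + 2 by ring]
    have h2 : g r ^ 2 = (r ^ ((α - 2 * β + 2) / 2) * r ^ ((α - 2 * β + 2) / 2)) * a r ^ 2
        * (s2 r * s2 r) := by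
      rw [hg]; ring
    simp only [hφB]
    rw [h2, h1, hs2sq r hr]
  have heH : Set.EqOn φH (fun r => 2 * (f r * g r)) (Set.Ioi 0) := by
    intro r hr
    have hr0 : (0 : ℝ) < r := hr
    have h1 : (r : ℝ) ^ (-α / 2) * r ^ ((α - 2 * β + 2) / 2) = r ^ (1 - β) := by
      rw [← Real.rpow_add hr0, show -α / 2 + (α - 2 * β + 2) / 2 = 1 - β by ring]
    have h2 : 2 * (f r * g r) = (r ^ (-α / 2) * r ^ ((α - 2 * β + 2) / 2)) * (s2 r * s2 r)
        * (2 * a r * deriv a r) := by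
      rw [hf, hg]; ring
    simp only [hφH]
    rw [h2, h1, hs2sq r hr]
  have intf2 : IntegrableOn (fun r => f r ^ 2) (Set.Ioi 0) :=
    intA.congr_fun heA measurableSet_Ioi
  have intg2 : IntegrableOn (fun r => g r ^ 2) (Set.Ioi 0) :=
    intB.congr_fun heB measurableSet_Ioi
  have intfg : IntegrableOn (fun r => f r * g r) (Set.Ioi 0) := by
    have h1 : IntegrableOn (fun x => 1 / 2 * φH x) (Set.Ioi 0) := intH.const_mul _
    exact h1.congr_fun
      (fun r hr => by rw [show f r * g r = 1 / 2 * φH r by rw [heH hr]; ring])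
      measurableSet_Ioi
  have hcs := cs_integral' (volume.restrict (Set.Ioi 0)) f g intf2 intg2 intfg
  -- translate
  have eA : (∫ r in Set.Ioi (0 : ℝ), φA r) = ∫ x in Set.Ioi (0 : ℝ), f x ^ 2 :=
    setIntegral_congr_fun measurableSet_Ioi heA
  have eB : (∫ r in Set.Ioi (0 : ℝ), φB r) = ∫ x in Set.Ioi (0 : ℝ), g x ^ 2 :=
    setIntegral_congr_fun measurableSet_Ioi heB
  have eH : (∫ r in Set.Ioi (0 : ℝ), φH r) = 2 * ∫ x in Set.Ioi (0 : ℝ), f x * g x := by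
    rw [setIntegral_congr_fun measurableSet_Ioi heH, integral_const_mul]
  rw [ge_iff_le]
  have h2 : (((N : ℝ) - β) * ∫ r in Set.Ioi (0 : ℝ), φI r) ^ 2
      ≤ (2 * ∫ x in Set.Ioi (0 : ℝ), f x * g x) ^ 2 := by
    have hx : (0 : ℝ) ≤ ((N : ℝ) - β) * ∫ r in Set.Ioi (0 : ℝ), φI r :=
      mul_nonneg hβN hI0
    have hy := hmain
    rw [eH] at hy
    nlinarith [hx, hy]
  rw [eA, eB]
  nlinarith [hcs, h2, hI0, hβN]
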